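/- arXiv:2308.15845 — 2 statements merged into one kernel-verified Lean document; each statement's English description precedes it below -/
import Mathlib

section
/- For every n ≥ 1, the set of real polynomials of degree exactly n that verify property (P) is an open subset of the space ℝ_n[X] of real polynomials of degree at most n, where ℝ_n[X] is equipped with the sup-norm on coefficients ‖∑ a_k X^k‖_∞ = max_k |a_k|. -/
open Polynomial

/-- The polynomial `∑ aₖ Xᵏ` associated to the coefficient vector `a`; the space
`𝕂ₙ[X]` of polynomials of degree at most `n` is identified with the coefficient space
`Fin (n+1) → 𝕂`, whose product topology coincides with the sup-norm topology. -/
noncomputable def polyOf {K : Type*} [Semiring K] {n : ℕ} (a : Fin (n + 1) → K) :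
    Polynomial K :=
  ∑ k : Fin (n + 1), Polynomial.C (a k) * Polynomial.X ^ (k : ℕ)

/-- A polynomial verifies property (𝒫) if it is a product of pairwise distinct monic
irreducible quadratics and of powers `(X - λᵢ)^{nᵢ}` with the `λᵢ` pairwise distinct
and `1 ≤ nᵢ ≤ 2`. -/
def VerifiesP {K : Type*} [Field K] (p : Polynomial K) : Prop :=
  ∃ (r q : ℕ) (P : Fin r → Polynomial K) (lam : Fin q → K) (m : Fin q → ℕ),
    (∀ i, (P i).Monic ∧ Irreducible (P i) ∧ (P i).natDegree = 2) ∧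
    Function.Injective P ∧ Function.Injective lam ∧
    (∀ i, 1 ≤ m i ∧ m i ≤ 2) ∧
    p = (∏ i, P i) * ∏ i, (X - C (lam i)) ^ (m i)

/-!
By unique factorisation, a monic polynomial verifies (𝒫) exactly when each monic irreducible
factor `q` occurs with multiplicity at most `3 - deg q`. Over `ℝ` this fails exactly when
`(X - x)³` or `(X² + sX + t)²` with `s² ≤ 4t` divides the polynomial. Divisibility by a monic
polynomial of fixed degree is a closed condition on the coefficients (the remainder depends
continuously on them), and for polynomials of degree exactly `n` Cauchy's bound keeps the
parameters `x, s, t` of such a divisor in a compact set, locally uniformly in the coefficients.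
So failing (𝒫) is locally the projection of a closed set along a compact factor, a closed
condition.
-/

open UniqueFactorizationMonoid Function Filter Topology

section Factorization

variable {K : Type*} [Field K]

theorem verifiesP_of_fintype {ι κ : Type*} [Fintype ι] [Fintype κ] {p : K[X]} (P : ι → K[X])
    (lam : κ → K) (m : κ → ℕ) (hP : ∀ i, (P i).Monic ∧ Irreducible (P i) ∧ (P i).natDegree = 2)
    (hPinj : Injective P) (hlam : Injective lam) (hm : ∀ i, 1 ≤ m i ∧ m i ≤ 2)
    (hp : p = (∏ i, P i) * ∏ i, (X - C (lam i)) ^ m i) : VerifiesP p := by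
  let e := (Fintype.equivFin ι).symm
  let e' := (Fintype.equivFin κ).symm
  refine ⟨_, _, P ∘ e, lam ∘ e', m ∘ e', fun i => hP _, hPinj.comp e.injective,
    hlam.comp e'.injective, fun i => hm _, ?_⟩
  simp only [hp, comp_apply, e.prod_comp P, e'.prod_comp fun i => (X - C (lam i)) ^ m i]

theorem VerifiesP.monic {p : K[X]} (h : VerifiesP p) : p.Monic := by
  obtain ⟨r, s, P, lam, m, hP, -, -, -, rfl⟩ := h
  exact (monic_prod_of_monic _ _ fun i _ => (hP i).1).mul
    (monic_prod_of_monic _ _ fun i _ => (monic_X_sub_C _).pow _)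

variable [DecidableEq K]

theorem pow_dvd_iff_le_count_normalizedFactors {p q : K[X]} (hq : Irreducible q) (hqm : q.Monic)
    (hp : p ≠ 0) {k : ℕ} : q ^ k ∣ p ↔ k ≤ (normalizedFactors p).count q := by
  rw [Multiset.le_count_iff_replicate_le, ← hqm.normalize_eq_self, ← hq.normalizedFactors_pow,
    hqm.normalize_eq_self,
    dvd_iff_normalizedFactors_le_normalizedFactors (pow_ne_zero _ hq.ne_zero) hp]

theorem normalizedFactors_prod_pow {ι : Type*} [Fintype ι] {f : ι → K[X]}
    (hf : ∀ i, Irreducible (f i) ∧ (f i).Monic) (e : ι → ℕ) :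
    normalizedFactors (∏ i, f i ^ e i) = ∑ i, Multiset.replicate (e i) (f i) := by
  have hmem : ∀ q ∈ ∑ i, Multiset.replicate (e i) (f i), ∃ i, q = f i := by
    simp only [Multiset.mem_sum, Finset.mem_univ, Multiset.mem_replicate, true_and]
    exact fun q ⟨i, _, hi⟩ => ⟨i, hi⟩
  rw [← Multiset.map_id (∑ i, _), ← Multiset.map_congr rfl fun q hq => ?_,
    ← normalizedFactors_prod_eq _ fun q hq => ?_, Multiset.prod_sum]
  · simp [Multiset.prod_replicate]
  all_goals obtain ⟨i, rfl⟩ := hmem q hq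
  · exact (hf i).1
  · exact (hf i).2.normalize_eq_self

theorem count_normalizedFactors_prod_pow_of_ne_zero {ι : Type*} [Fintype ι] {f : ι → K[X]}
    (hinj : Injective f) (hf : ∀ i, Irreducible (f i) ∧ (f i).Monic) (e : ι → ℕ) {q : K[X]}
    (hq : (normalizedFactors (∏ i, f i ^ e i)).count q ≠ 0) :
    ∃ i, f i = q ∧ (normalizedFactors (∏ i, f i ^ e i)).count q = e i := by
  simp only [normalizedFactors_prod_pow hf, Multiset.count_sum', Multiset.count_replicate] at hq ⊢
  obtain ⟨i, -, hi⟩ := Finset.exists_ne_zero_of_sum_ne_zero hq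
  have hfi : f i = q := by by_contra h; simp [h] at hi
  refine ⟨i, hfi, (Finset.sum_eq_single i (fun j _ hj => ?_) (by simp)).trans (if_pos hfi)⟩
  rw [if_neg (fun h => hj (hinj (h.trans hfi.symm)))]

theorem VerifiesP.natDegree_add_count_le {p : K[X]} (h : VerifiesP p) :
    ∀ q ∈ normalizedFactors p, q.natDegree + (normalizedFactors p).count q ≤ 3 := by
  obtain ⟨r, s, P, lam, m, hP, hPinj, hlam, hm, rfl⟩ := h
  have hA : ∀ i, Irreducible (P i) ∧ (P i).Monic := fun i => ⟨(hP i).2.1, (hP i).1⟩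
  have hB : ∀ i, Irreducible (X - C (lam i)) ∧ (X - C (lam i)).Monic :=
    fun i => ⟨irreducible_X_sub_C _, monic_X_sub_C _⟩
  have hBinj : Injective fun i => X - C (lam i) :=
    fun i j h => hlam (C_injective (sub_right_injective h))
  intro q hq
  have hcount := Multiset.count_pos.2 hq
  rw [normalizedFactors_mul (monic_prod_of_monic _ _ fun i _ => (hA i).2).ne_zero
    (monic_prod_of_monic _ _ fun i _ => (hB i).2.pow _).ne_zero, Multiset.count_add,
    show ∏ i, P i = ∏ i, P i ^ 1 by simp] at hcount ⊢
  have hcA : (normalizedFactors (∏ i, P i ^ 1)).count q = 0 ∨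
      (normalizedFactors (∏ i, P i ^ 1)).count q = 1 ∧ q.natDegree = 2 := by
    refine or_iff_not_imp_left.2 fun h => ?_
    obtain ⟨i, rfl, hi⟩ := count_normalizedFactors_prod_pow_of_ne_zero hPinj hA _ h
    exact ⟨hi, (hP i).2.2⟩
  have hcB : (normalizedFactors (∏ i, (X - C (lam i)) ^ m i)).count q = 0 ∨
      (normalizedFactors (∏ i, (X - C (lam i)) ^ m i)).count q ≤ 2 ∧ q.natDegree = 1 := by
    refine or_iff_not_imp_left.2 fun h => ?_
    obtain ⟨i, rfl, hi⟩ := count_normalizedFactors_prod_pow_of_ne_zero hBinj hB _ h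
    exact ⟨hi ▸ (hm i).2, natDegree_X_sub_C _⟩
  omega

theorem prod_eq_prod_natDegree_two_mul_prod_natDegree_one {M : Multiset K[X]}
    (hdeg : ∀ q ∈ M, q.natDegree = 1 ∨ q.natDegree = 2 ∧ M.count q = 1) :
    M.prod = (∏ q ∈ M.toFinset.filter (·.natDegree = 2), q) *
      ∏ q ∈ M.toFinset.filter (·.natDegree = 1), q ^ M.count q := by
  rw [Finset.prod_multiset_count, ← Finset.prod_filter_mul_prod_filter_not M.toFinset
    (·.natDegree = 2)]
  congr 1
  · refine Finset.prod_congr rfl fun q hq => ?_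
    rw [Finset.mem_filter, Multiset.mem_toFinset] at hq
    have := hdeg q hq.1
    rw [show M.count q = 1 by omega, pow_one]
  · refine Finset.prod_congr (Finset.filter_congr fun q hq => ?_) fun _ _ => rfl
    have := hdeg q (Multiset.mem_toFinset.1 hq)
    omega

theorem verifiesP_of_monic {p : K[X]} (hmon : p.Monic)
    (hbound : ∀ q ∈ normalizedFactors p, q.natDegree + (normalizedFactors p).count q ≤ 3) :
    VerifiesP p := by
  set M := normalizedFactors p
  have hmem : ∀ q ∈ M, Irreducible q ∧ q.Monic := fun q hq =>
    ((Polynomial.mem_normalizedFactors_iff hmon.ne_zero).1 hq).imp_right And.left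
  have hcount : ∀ q ∈ M, 0 < q.natDegree ∧ 0 < M.count q ∧ q.natDegree + M.count q ≤ 3 :=
    fun q hq => ⟨(hmem q hq).1.natDegree_pos, Multiset.count_pos.2 hq, hbound q hq⟩
  let Q := M.toFinset.filter (·.natDegree = 2)
  let L := M.toFinset.filter (·.natDegree = 1)
  have hQ : ∀ q ∈ Q, q ∈ M ∧ q.natDegree = 2 := fun q hq => by simpa [Q] using hq
  have hL : ∀ q ∈ L, q ∈ M ∧ q.natDegree = 1 := fun q hq => by simpa [L] using hq
  have hLX : ∀ q ∈ L, X - C (-q.coeff 0) = q := fun q hq => by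
    rw [map_neg, sub_neg_eq_add, ← ((hmem q (hL q hq).1).2.eq_X_add_C (hL q hq).2)]
  refine verifiesP_of_fintype (ι := Q) (κ := L) Subtype.val (fun q => -q.1.coeff 0)
    (fun q => M.count q.1) (fun q => ?_) Subtype.val_injective (fun q q' h => ?_) (fun q => ?_) ?_
  · obtain ⟨hq, h2⟩ := hQ q q.2
    exact ⟨(hmem q hq).2, (hmem q hq).1, h2⟩
  · simp only at h
    exact Subtype.ext ((hLX q q.2).symm.trans (h ▸ hLX q' q'.2))
  · have := hcount q (hL q q.2).1
    have := (hL q q.2).2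
    omega
  · have hMp : M.prod = p := by
      simpa [hmon.leadingCoeff] using leadingCoeff_mul_prod_normalizedFactors p
    rw [← hMp, prod_eq_prod_natDegree_two_mul_prod_natDegree_one fun q hq => ?_,
      ← Finset.prod_coe_sort Q, ← Finset.prod_coe_sort L]
    · exact congrArg _ (Finset.prod_congr rfl fun q _ => by rw [hLX q q.2])
    · have := hcount q hq
      omega

theorem verifiesP_iff {p : K[X]} : VerifiesP p ↔
    p.Monic ∧ ∀ q ∈ normalizedFactors p, q.natDegree + (normalizedFactors p).count q ≤ 3 :=
  ⟨fun h => ⟨h.monic, h.natDegree_add_count_le⟩, fun h => verifiesP_of_monic h.1 h.2⟩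

theorem exists_verifiesP_C_mul_iff {p : K[X]} (hp : p ≠ 0) :
    (∃ c : K, c ≠ 0 ∧ VerifiesP (C c * p)) ↔
      ∀ q ∈ normalizedFactors p, q.natDegree + (normalizedFactors p).count q ≤ 3 := by
  have hnf : ∀ {c : K}, c ≠ 0 → normalizedFactors (C c * p) = normalizedFactors p := fun hc =>
    (associated_unit_mul_left p _ (isUnit_C.2 hc.isUnit)).normalizedFactors_eq
  constructor
  · rintro ⟨c, hc, h⟩
    rw [verifiesP_iff, hnf hc] at h
    exact h.2
  · intro h
    have hc := inv_ne_zero (leadingCoeff_ne_zero.2 hp)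
    exact ⟨_, hc, verifiesP_iff.2 ⟨monic_C_mul_of_mul_leadingCoeff_eq_one
      (inv_mul_cancel₀ (leadingCoeff_ne_zero.2 hp)), by rwa [hnf hc]⟩⟩

end Factorization

/-- The non-strict `s ^ 2 ≤ 4 * t` makes the parameter set closed; its boundary case
`(X + s / 2) ^ 4` is already covered by the cube. -/
def HasExcessFactor (p : ℝ[X]) : Prop :=
  (∃ x : ℝ, (X - C x) ^ 3 ∣ p) ∨ ∃ s t : ℝ, s ^ 2 ≤ 4 * t ∧ (X ^ 2 + C s * X + C t) ^ 2 ∣ p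

theorem sq_le_of_irreducible_quadratic {s t : ℝ} (h : Irreducible (X ^ 2 + C s * X + C t)) :
    s ^ 2 ≤ 4 * t := by
  by_contra! hst
  have hroot : IsRoot (X ^ 2 + C s * X + C t) ((-s + √(s ^ 2 - 4 * t)) / 2) := by
    have := Real.sq_sqrt (sub_nonneg.2 hst.le)
    simp only [IsRoot, eval_add, eval_mul, eval_pow, eval_X, eval_C]
    linear_combination this / 4
  have := degree_eq_one_of_irreducible_of_root h hroot
  rw [degree_eq_natDegree h.ne_zero, (isMonicOfDegree_add_add_two s t).natDegree_eq] at this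
  norm_num at this

theorem irreducible_or_eq_X_sub_C_sq_of_sq_le {s t : ℝ} (hst : s ^ 2 ≤ 4 * t) :
    Irreducible (X ^ 2 + C s * X + C t) ∨ ∃ α, X ^ 2 + C s * X + C t = (X - C α) ^ 2 := by
  refine or_iff_not_imp_left.2 fun hirr => ?_
  obtain ⟨α, hα⟩ : ∃ α, IsRoot (X ^ 2 + C s * X + C t) α := by
    by_contra! h
    exact hirr (irreducible_of_degree_le_three_of_not_isRoot
      (by simp [(isMonicOfDegree_add_add_two s t).natDegree_eq]) h)
  simp only [IsRoot, eval_add, eval_mul, eval_pow, eval_X, eval_C] at hα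
  have hs : s = -2 * α := by nlinarith [sq_nonneg (2 * α + s)]
  have ht : t = α ^ 2 := by subst hs; linarith
  exact ⟨α, by rw [hs, ht]; simp only [map_mul, map_neg, map_pow, map_ofNat]; ring⟩

theorem hasExcessFactor_iff_exists_mem_normalizedFactors {p : ℝ[X]} (hp : p ≠ 0) :
    HasExcessFactor p ↔ ∃ q ∈ normalizedFactors p, 3 < q.natDegree + (normalizedFactors p).count q := by
  have hfactor : ∀ {q : ℝ[X]} {k : ℕ}, Irreducible q → q.Monic → 0 < k → 3 < q.natDegree + k →
      q ^ k ∣ p → ∃ q ∈ normalizedFactors p, 3 < q.natDegree + (normalizedFactors p).count q :=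
    fun {q k} hq hqm hk hdeg h => by
      have := (pow_dvd_iff_le_count_normalizedFactors hq hqm hp).1 h
      exact ⟨q, Multiset.count_pos.1 (by omega), by omega⟩
  constructor
  · rintro (⟨x, hx⟩ | ⟨s, t, hst, hd⟩)
    · exact hfactor (irreducible_X_sub_C x) (monic_X_sub_C x) (by norm_num) (by simp) hx
    · rcases irreducible_or_eq_X_sub_C_sq_of_sq_le hst with hirr | ⟨α, hα⟩
      · exact hfactor hirr (isMonicOfDegree_add_add_two s t).monic (by norm_num)
          (by simp [(isMonicOfDegree_add_add_two s t).natDegree_eq]) hd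
      · rw [hα, ← pow_mul] at hd
        exact hfactor (irreducible_X_sub_C α) (monic_X_sub_C α) (by norm_num) (by simp) hd
  · rintro ⟨q, hq, hcount⟩
    obtain ⟨hirr, hqm, -⟩ := (Polynomial.mem_normalizedFactors_iff hp).1 hq
    have h1 := hirr.natDegree_pos
    have h2 := hirr.natDegree_le_two
    rcases (show q.natDegree = 1 ∨ q.natDegree = 2 by omega) with hdeg | hdeg
    · obtain ⟨r, rfl⟩ := isMonicOfDegree_one_iff.1 ⟨hdeg, hqm⟩
      refine .inl ⟨-r, ?_⟩
      rw [map_neg, sub_neg_eq_add, pow_dvd_iff_le_count_normalizedFactors hirr hqm hp]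
      omega
    · obtain ⟨s, t, rfl⟩ := isMonicOfDegree_two_iff.1 ⟨hdeg, hqm⟩
      refine .inr ⟨s, t, sq_le_of_irreducible_quadratic hirr, ?_⟩
      rw [pow_dvd_iff_le_count_normalizedFactors hirr hqm hp]
      omega

theorem degree_sub_C_coeff_mul_X_pow_mul_lt {R : Type*} [Ring R] {f g : R[X]} {m n : ℕ}
    (hmn : m ≤ n) (hf : f.degree < ↑(n + 1)) (hg : g.Monic) (hgd : g.natDegree = m) :
    (f - C (f.coeff n) * (X ^ (n - m) * g)).degree < ↑n := by
  refine (degree_lt_iff_coeff_zero _ _).2 fun i hi => ?_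
  have hgi : g.coeff (i - (n - m)) = if i = n then 1 else 0 := by
    split_ifs with h
    · rw [h, show n - (n - m) = m by omega, ← hgd, hg.coeff_natDegree]
    · exact coeff_eq_zero_of_natDegree_lt (by omega)
  simp only [coeff_sub, coeff_C_mul, coeff_X_pow_mul', if_pos (by omega : n - m ≤ i), hgi]
  split_ifs with h
  · rw [h, mul_one, sub_self]
  · rw [(degree_lt_iff_coeff_zero _ _).1 hf i (by omega), mul_zero, sub_zero]

section Continuity

variable {α β R : Type*} [TopologicalSpace α] [TopologicalSpace β]

def ContinuousCoeffs [Semiring R] [TopologicalSpace R] (f : α → R[X]) : Prop :=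
  ∀ n, Continuous fun a => (f a).coeff n

namespace ContinuousCoeffs

section Semiring

variable [Semiring R] [TopologicalSpace R] {f g : α → R[X]}

theorem comp (hf : ContinuousCoeffs f) {φ : β → α} (hφ : Continuous φ) :
    ContinuousCoeffs (f ∘ φ) :=
  fun n => (hf n).comp hφ

theorem const (p : R[X]) : ContinuousCoeffs fun _ : α => p :=
  fun _ => continuous_const

theorem C {c : α → R} (hc : Continuous c) : ContinuousCoeffs fun a => C (c a) := fun n => by
  simp only [coeff_C]
  split_ifs
  exacts [hc, continuous_const]

variable [IsTopologicalSemiring R]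

theorem add (hf : ContinuousCoeffs f) (hg : ContinuousCoeffs g) :
    ContinuousCoeffs fun a => f a + g a := fun n => by
  simp only [coeff_add]
  exact (hf n).add (hg n)

theorem mul (hf : ContinuousCoeffs f) (hg : ContinuousCoeffs g) :
    ContinuousCoeffs fun a => f a * g a := fun n => by
  simpa only [coeff_mul] using continuous_finsetSum _ fun ij _ => (hf ij.1).mul (hg ij.2)

theorem pow (hf : ContinuousCoeffs f) (k : ℕ) : ContinuousCoeffs fun a => f a ^ k := by
  induction k with
  | zero => simpa using const 1
  | succ k ih => simpa only [pow_succ] using ih.mul hf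

end Semiring

variable [CommRing R] [TopologicalSpace R] [IsTopologicalRing R] {f g : α → R[X]}

theorem sub (hf : ContinuousCoeffs f) (hg : ContinuousCoeffs g) :
    ContinuousCoeffs fun a => f a - g a := fun n => by
  simp only [coeff_sub]
  exact (hf n).sub (hg n)

theorem modByMonic [Nontrivial R] (hf : ContinuousCoeffs f) (hg : ContinuousCoeffs g) {m n : ℕ}
    (hgm : ∀ a, (g a).Monic) (hgd : ∀ a, (g a).natDegree = m) (hfd : ∀ a, (f a).degree < n) :
    ContinuousCoeffs fun a => f a %ₘ g a := by
  have hsmall : ∀ {f : α → R[X]}, ContinuousCoeffs f → (∀ a, (f a).degree < m) →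
      ContinuousCoeffs fun a => f a %ₘ g a := fun {f} hf hfd => by
    refine fun j => (hf j).congr fun a => ?_
    dsimp only
    rw [(modByMonic_eq_self_iff (hgm a)).2]
    rw [degree_eq_natDegree (hgm a).ne_zero, hgd a]
    exact hfd a
  induction n generalizing f with
  | zero => exact hsmall hf fun a => (hfd a).trans_le (by simp)
  | succ n ih =>
    rcases lt_or_ge n m with hnm | hmn
    · exact hsmall hf fun a => (hfd a).trans_le (by exact_mod_cast hnm)
    -- Removing the `Xⁿ` term with a multiple of `g` does not change the remainder.
    let f' a := f a - Polynomial.C ((f a).coeff n) * (X ^ (n - m) * g a)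
    have hf' : ContinuousCoeffs f' := hf.sub ((C (hf n)).mul ((const _).mul hg))
    have hf'd : ∀ a, (f' a).degree < n := fun a =>
      degree_sub_C_coeff_mul_X_pow_mul_lt hmn (hfd a) (hgm a) (hgd a)
    refine fun j => (ih hf' hf'd j).congr fun a => ?_
    dsimp only
    rw [modByMonic_eq_of_dvd_sub (hgm a) ⟨-(Polynomial.C ((f a).coeff n) * X ^ (n - m)), by
      simp only [f']; ring⟩]

end ContinuousCoeffs

theorem isClosed_setOf_exists_dvd [CommRing R] [TopologicalSpace R] [IsTopologicalRing R]
    [Nontrivial R] [T2Space R] {f : α → R[X]} {g : β → R[X]} {m n : ℕ} (hf : ContinuousCoeffs f)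
    (hfd : ∀ a, (f a).degree < n) (hg : ContinuousCoeffs g) (hgm : ∀ b, (g b).Monic)
    (hgd : ∀ b, (g b).natDegree = m) {K : Set β} (hK : IsCompact K) :
    IsClosed {a | ∃ b ∈ K, g b ∣ f a} := by
  have := isCompact_iff_compactSpace.1 hK
  have hrem := (hf.comp continuous_fst).modByMonic (hg.comp (continuous_subtype_val.comp
    (continuous_snd (X := α) (Y := K)))) (fun x => hgm x.2) (fun x => hgd x.2) fun x => hfd x.1
  have hclosed : IsClosed {x : α × K | f x.1 %ₘ g x.2 = 0} := by
    simp only [Polynomial.ext_iff, coeff_zero, Set.ofPred_forall]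
    exact isClosed_iInter fun j => isClosed_eq (hrem j) continuous_const
  convert isClosedMap_fst_of_compactSpace _ hclosed using 1
  ext a
  simp [(modByMonic_eq_zero_iff_dvd (hgm _))]

end Continuity

section PolyOf

variable {R : Type*} {n : ℕ}

theorem coeff_polyOf [Semiring R] (a : Fin (n + 1) → R) (k : Fin (n + 1)) :
    (polyOf a).coeff k = a k := by
  simp [polyOf, Fin.val_inj]

theorem degree_polyOf_lt [Semiring R] (a : Fin (n + 1) → R) : (polyOf a).degree < ↑(n + 1) :=
  degree_sum_fin_lt a

theorem degree_polyOf_eq_iff [Semiring R] (a : Fin (n + 1) → R) :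
    (polyOf a).degree = n ↔ a (Fin.last n) ≠ 0 := by
  rw [← coeff_polyOf a (Fin.last n), Fin.val_last]
  refine ⟨coeff_ne_zero_of_eq_degree, degree_eq_of_le_of_coeff_ne_zero ?_⟩
  exact (degree_le_iff_coeff_zero _ _).2 fun k hk =>
    (degree_lt_iff_coeff_zero _ _).1 (degree_polyOf_lt a) k (by exact_mod_cast hk)

theorem continuousCoeffs_polyOf [Semiring R] [TopologicalSpace R] [IsTopologicalSemiring R] :
    ContinuousCoeffs (polyOf : (Fin (n + 1) → R) → R[X]) := fun j => by
  simp only [polyOf, finsetSum_coeff, coeff_C_mul_X_pow]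
  exact continuous_finsetSum _ fun k _ => by split_ifs <;> fun_prop

theorem norm_lt_of_aeval_polyOf_eq_zero {a : Fin (n + 1) → ℝ} (ha : a (Fin.last n) ≠ 0) {z : ℂ}
    (hz : aeval z (polyOf a) = 0) : ‖z‖ < ‖a‖ / ‖a (Fin.last n)‖ + 1 := by
  have hdeg : (polyOf a).natDegree = n :=
    natDegree_eq_of_degree_eq_some ((degree_polyOf_eq_iff a).2 ha)
  have hlead : (polyOf a).leadingCoeff = a (Fin.last n) := by
    rw [leadingCoeff, hdeg, ← coeff_polyOf a (Fin.last n), Fin.val_last]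
  set p := (polyOf a).map (algebraMap ℝ ℂ)
  have hp : p ≠ 0 := (Polynomial.map_ne_zero_iff (algebraMap ℝ ℂ).injective).2 fun h => by
    simp [h] at hlead; exact ha hlead.symm
  have hroot : p.IsRoot z := by rwa [IsRoot, eval_map, ← aeval_def]
  have hcb : cauchyBound p ≤ ‖a‖₊ / ‖a (Fin.last n)‖₊ + 1 := by
    simp only [cauchyBound, p, natDegree_map, hdeg, leadingCoeff_map, hlead, coeff_map,
      Complex.coe_algebraMap, Complex.nnnorm_real]
    gcongr
    refine Finset.sup_le fun i hi => ?_
    rw [Finset.mem_range] at hi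
    rw [show i = (⟨i, by omega⟩ : Fin (n + 1)) from rfl, coeff_polyOf]
    exact nnnorm_le_pi_nnnorm a _
  calc ‖z‖ = ‖z‖₊ := rfl
    _ < cauchyBound p := NNReal.coe_lt_coe.2 (hroot.norm_lt_cauchyBound hp)
    _ ≤ ‖a‖₊ / ‖a (Fin.last n)‖₊ + 1 := NNReal.coe_le_coe.2 hcb
    _ = ‖a‖ / ‖a (Fin.last n)‖ + 1 := by simp

theorem abs_lt_of_X_sub_C_dvd_polyOf {a : Fin (n + 1) → ℝ} (ha : a (Fin.last n) ≠ 0) {x : ℝ}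
    (h : X - C x ∣ polyOf a) : |x| < ‖a‖ / ‖a (Fin.last n)‖ + 1 := by
  have := norm_lt_of_aeval_polyOf_eq_zero ha (z := x)
    (aeval_eq_zero_of_dvd_aeval_eq_zero h (by simp))
  rwa [Complex.norm_real, Real.norm_eq_abs] at this

theorem lt_sq_of_quadratic_dvd_polyOf {a : Fin (n + 1) → ℝ} (ha : a (Fin.last n) ≠ 0) {s t : ℝ}
    (hst : s ^ 2 ≤ 4 * t) (h : X ^ 2 + C s * X + C t ∣ polyOf a) :
    t < (‖a‖ / ‖a (Fin.last n)‖ + 1) ^ 2 := by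
  obtain ⟨w, hw⟩ : ∃ w : ℝ, w ^ 2 = 4 * t - s ^ 2 := ⟨_, Real.sq_sqrt (sub_nonneg.2 hst)⟩
  set z : ℂ := ⟨-s / 2, w / 2⟩
  have hz : aeval z (X ^ 2 + C s * X + C t) = 0 := by
    simp only [Complex.ext_iff, z, map_add, map_mul, aeval_X, aeval_C, Complex.coe_algebraMap, sq,
      Complex.add_re, Complex.mul_re, Complex.ofReal_re, Complex.ofReal_im, Complex.add_im,
      Complex.mul_im, Complex.zero_re, Complex.zero_im]
    constructor <;> nlinarith
  have hnorm : ‖z‖ ^ 2 = t := by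
    rw [Complex.sq_norm, Complex.normSq_apply]
    simp only [z]
    nlinarith
  rw [← hnorm]
  exact pow_lt_pow_left₀ (norm_lt_of_aeval_polyOf_eq_zero ha
    (aeval_eq_zero_of_dvd_aeval_eq_zero h hz)) (norm_nonneg z) two_ne_zero

end PolyOf

theorem isCompact_setOf_sq_le_four_mul {R : ℝ} (hR : 0 ≤ R) :
    IsCompact {st : ℝ × ℝ | st.1 ^ 2 ≤ 4 * st.2 ∧ st.2 ≤ R ^ 2} := by
  refine (isCompact_Icc.prod (isCompact_Icc (a := 0))).of_isClosed_subset
    ((isClosed_le (continuous_fst.pow 2) (continuous_const.mul continuous_snd)).inter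
      (isClosed_le continuous_snd continuous_const))
    fun st ⟨h1, h2⟩ => ⟨abs_le_of_sq_le_sq' (b := 2 * R) (by nlinarith) (by positivity), ?_, h2⟩
  nlinarith [sq_nonneg st.1]

/-- Divisors as in `HasExcessFactor` whose complex roots have modulus at most `R`. -/
def HasBoundedExcessFactor (R : ℝ) (p : ℝ[X]) : Prop :=
  (∃ x ∈ Set.Icc (-R) R, (X - C x) ^ 3 ∣ p) ∨
    ∃ st ∈ {st : ℝ × ℝ | st.1 ^ 2 ≤ 4 * st.2 ∧ st.2 ≤ R ^ 2},
      (X ^ 2 + C st.1 * X + C st.2) ^ 2 ∣ p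

theorem HasBoundedExcessFactor.hasExcessFactor {R : ℝ} {p : ℝ[X]}
    (h : HasBoundedExcessFactor R p) : HasExcessFactor p := by
  rcases h with ⟨x, -, hx⟩ | ⟨st, ⟨hst, -⟩, hd⟩
  exacts [.inl ⟨x, hx⟩, .inr ⟨st.1, st.2, hst, hd⟩]

theorem HasExcessFactor.hasBoundedExcessFactor {n : ℕ} {a : Fin (n + 1) → ℝ}
    (ha : a (Fin.last n) ≠ 0) {R : ℝ} (hR : ‖a‖ / ‖a (Fin.last n)‖ + 1 ≤ R)
    (h : HasExcessFactor (polyOf a)) : HasBoundedExcessFactor R (polyOf a) := by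
  rcases h with ⟨x, hx⟩ | ⟨s, t, hst, hd⟩
  · refine .inl ⟨x, abs_le.1 ?_, hx⟩
    exact ((abs_lt_of_X_sub_C_dvd_polyOf ha ((dvd_pow_self _ three_ne_zero).trans hx)).trans_le
      hR).le
  · refine .inr ⟨(s, t), ⟨hst, ?_⟩, hd⟩
    exact ((lt_sq_of_quadratic_dvd_polyOf ha hst ((dvd_pow_self _ two_ne_zero).trans hd)).trans_le
      (pow_le_pow_left₀ (by positivity) hR 2)).le

theorem isClosed_setOf_hasBoundedExcessFactor {R : ℝ} (hR : 0 ≤ R) (n : ℕ) :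
    IsClosed {a : Fin (n + 1) → ℝ | HasBoundedExcessFactor R (polyOf a)} := by
  refine IsClosed.union ?_ ?_
  · exact isClosed_setOf_exists_dvd continuousCoeffs_polyOf degree_polyOf_lt
      (((ContinuousCoeffs.const X).sub (ContinuousCoeffs.C continuous_id)).pow 3)
      (fun x => (monic_X_sub_C x).pow 3) (m := 3) (fun x => by simp) isCompact_Icc
  · exact isClosed_setOf_exists_dvd continuousCoeffs_polyOf degree_polyOf_lt
      ((((ContinuousCoeffs.const _).add ((ContinuousCoeffs.C continuous_fst).mul
        (ContinuousCoeffs.const X))).add (ContinuousCoeffs.C continuous_snd)).pow 2)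
      (fun st => (isMonicOfDegree_add_add_two _ _).monic.pow 2)
      (fun st => by rw [natDegree_pow, (isMonicOfDegree_add_add_two _ _).natDegree_eq])
      (isCompact_setOf_sq_le_four_mul hR)

theorem isOpen_setOf_not_hasExcessFactor (n : ℕ) :
    IsOpen {a : Fin (n + 1) → ℝ | a (Fin.last n) ≠ 0 ∧ ¬HasExcessFactor (polyOf a)} := by
  refine isOpen_iff_mem_nhds.2 fun a₀ ⟨ha₀, hgood⟩ => ?_
  set B : (Fin (n + 1) → ℝ) → ℝ := fun a => ‖a‖ / ‖a (Fin.last n)‖ + 1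
  have hB : ContinuousAt B a₀ := by fun_prop (disch := exact norm_ne_zero_iff.2 ha₀)
  filter_upwards [(continuous_apply _).continuousAt.eventually_ne ha₀,
    hB.eventually_lt continuousAt_const (lt_add_one _),
    (isClosed_setOf_hasBoundedExcessFactor (R := B a₀ + 1) (by positivity) n).isOpen_compl.mem_nhds
      fun h => hgood h.hasExcessFactor] with a ha hBa hbad
  exact ⟨ha, fun h => hbad (h.hasBoundedExcessFactor ha hBa.le)⟩

theorem isOpen_verifiesP_real_general (n : ℕ) :
    IsOpen {a : Fin (n + 1) → ℝ |
      (polyOf a).degree = (n : ℕ) ∧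
      ∃ c : ℝ, c ≠ 0 ∧ VerifiesP (C c * polyOf a)} := by
  convert isOpen_setOf_not_hasExcessFactor n using 1
  ext a
  simp only [Set.mem_ofPred_eq, degree_polyOf_eq_iff]
  refine and_congr_right fun ha => ?_
  have hp : polyOf a ≠ 0 := fun h => ha (by rw [← coeff_polyOf a, h, coeff_zero])
  rw [exists_verifiesP_C_mul_iff hp, hasExcessFactor_iff_exists_mem_normalizedFactors hp]
  simp only [not_exists, not_and, not_lt]

/-- The set of real polynomials of degree exactly `n` verifying property (𝒫)
(a non-monic polynomial verifies (𝒫) when its monic associate does) is open in `ℝₙ[X]`. -/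
theorem isOpen_verifiesP_real (n : ℕ) (hn : 1 ≤ n) :
    IsOpen {a : Fin (n + 1) → ℝ |
      (polyOf a).degree = (n : ℕ) ∧
      ∃ c : ℝ, c ≠ 0 ∧ VerifiesP (C c * polyOf a)} :=
  isOpen_verifiesP_real_general n
end

section
/- Let K be a commutative field, λ ∈ K, and A a square matrix over K whose minimal polynomial is π_A(X) = (X − λ)². Then A is X-formable. -/
open Polynomial

/-- An `n × n` matrix is an X-form matrix if all its entries off the diagonal and the
anti-diagonal vanish. -/
def IsXForm {K : Type*} [Field K] {n : ℕ} (A : Matrix (Fin n) (Fin n) K) : Prop :=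
  ∀ i j : Fin n, (i : ℕ) ≠ (j : ℕ) → (i : ℕ) + (j : ℕ) ≠ n - 1 → A i j = 0

/-- A matrix is X-formable if it is similar to an X-form matrix. -/
def IsXFormable {K : Type*} [Field K] {n : ℕ} (A : Matrix (Fin n) (Fin n) K) : Prop :=
  ∃ B : Matrix (Fin n) (Fin n) K, IsXForm B ∧
    ∃ P : (Matrix (Fin n) (Fin n) K)ˣ,
      A = (P : Matrix (Fin n) (Fin n) K) * B * ((↑P⁻¹ : Matrix (Fin n) (Fin n) K))

/-! With `N = A - λ` we have `N² = 0`, so `range N ≤ ker N`. Pick a basis `w` of `range N` and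
preimages `c` with `N c = w`, and complete `w` by `u` to a basis of `ker N`; then `(w, u, c)` is a
basis. Listing it as `w₁, …, w_r, u, c_r, …, c_1` puts each `c_k` opposite `w_k` across the
anti-diagonal, so `N`, and hence `A = λ + N`, has X-form in this basis. -/

open Module LinearMap

section

variable {K V : Type*} [Field K] [AddCommGroup V] [Module K V]

theorem exists_basis_sum_of_comp_self_eq_zero [FiniteDimensional K V] (f : V →ₗ[K] V)
    (hf : f ∘ₗ f = 0) :
    ∃ (r s : ℕ) (b : Basis ((Fin r ⊕ Fin s) ⊕ Fin r) K V),
      (∀ i, f (b (.inl i)) = 0) ∧ ∀ k, f (b (.inr k)) = b (.inl (.inl k)) := by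
  have hrange : range f ≤ ker f := range_le_ker_iff.mpr hf
  set r := finrank K (range f)
  let w : Basis (Fin r) K (range f) := finBasis K _
  choose c hc using fun i => (w i).2
  let w' : Fin r → ker f := fun i => ⟨(w i : V), hrange (w i).2⟩
  have hw : LinearIndependent K ((range f).subtype ∘ w) :=
    w.linearIndependent.map' _ (range f).ker_subtype
  have hw' : LinearIndependent K w' := .of_comp (ker f).subtype hw
  let kb₀ := Basis.sumExtend hw'
  let := FiniteDimensional.fintypeBasisIndex kb₀
  let : Fintype (Basis.sumExtendIndex hw') := Fintype.sumRight (α := Fin r)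
  set s := Fintype.card (Basis.sumExtendIndex hw')
  let kb : Basis (Fin r ⊕ Fin s) K (ker f) :=
    kb₀.reindex (.sumCongr (.refl _) (Fintype.equivFin _))
  have hkb : ∀ i, kb (.inl i) = w' i := fun i => by simp [kb, kb₀, Basis.sumExtend]; rfl
  have hfc : LinearIndependent K (f ∘ c) := by
    convert hw using 1
    exact funext hc
  have hker : Submodule.span K (Set.range ((ker f).subtype ∘ kb)) ≤ ker f :=
    Submodule.span_le.mpr (by rintro _ ⟨i, rfl⟩; exact (kb i).2)
  have hli : LinearIndependent K (Sum.elim ((ker f).subtype ∘ kb) c) :=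
    .sum_type (kb.linearIndependent.map' _ (ker f).ker_subtype) (.of_comp f hfc)
      ((Submodule.range_ker_disjoint hfc).symm.mono_left hker)
  have hcard : Fintype.card ((Fin r ⊕ Fin s) ⊕ Fin r) = finrank K V := by
    rw [← f.finrank_range_add_finrank_ker, finrank_eq_card_basis kb]
    simp only [Fintype.card_sum, Fintype.card_fin]
    omega
  refine ⟨r, s, basisOfLinearIndependentOfCardEqFinrank' _ hli hcard, fun i => ?_, fun k => ?_⟩
  · simp
  · simp [hc, hkb, w']

theorem exists_basis_apply_eq_zero_or_rev_of_comp_self_eq_zero [FiniteDimensional K V] {n : ℕ}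
    (hn : finrank K V = n) (f : V →ₗ[K] V) (hf : f ∘ₗ f = 0) :
    ∃ b : Basis (Fin n) K V, ∀ j, f (b j) = 0 ∨ f (b j) = b j.rev := by
  obtain ⟨r, s, b, hb_ker, hb⟩ := exists_basis_sum_of_comp_self_eq_zero f hf
  have hrsn : r + s + r = n := by simpa [← hn] using (finrank_eq_card_basis b).symm
  -- The last block is reversed, so that `c_k` lands at the mirror position of `w_k = f c_k`.
  let e : (Fin r ⊕ Fin s) ⊕ Fin r ≃ Fin n :=
    ((Equiv.sumCongr finSumFinEquiv Fin.revPerm).trans finSumFinEquiv).trans (finCongr hrsn)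
  have he : ∀ k, (e (.inr k)).rev = e (.inl (.inl k)) := fun k => by
    ext
    simp [e]
    omega
  refine ⟨b.reindex e, fun j => ?_⟩
  obtain ⟨x | k, rfl⟩ := e.surjective j
  · exact .inl (by simpa using hb_ker x)
  · exact .inr (by simp [he, hb])

theorem isXForm_toMatrix_of_apply_eq_smul_add_smul_rev {n : ℕ} (b : Basis (Fin n) K V)
    (f : V →ₗ[K] V) (hf : ∀ j, ∃ x y : K, f (b j) = x • b j + y • b j.rev) :
    IsXForm (LinearMap.toMatrix b b f) := by
  intro i j hij hsum
  obtain ⟨x, y, hxy⟩ := hf j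
  have hj : j ≠ i := fun h => hij (congrArg _ h.symm)
  have hrev : j.rev ≠ i := by
    rintro rfl
    simp only [Fin.val_rev] at hsum
    omega
  simp [LinearMap.toMatrix_apply, hxy, hj, hrev]

end

theorem isXFormable_of_isXForm_toMatrix {K : Type*} [Field K] {n : ℕ}
    (A : Matrix (Fin n) (Fin n) K) (b : Basis (Fin n) K (Fin n → K))
    (h : IsXForm (LinearMap.toMatrix b b (Matrix.toLin' A))) : IsXFormable A := by
  let e := Pi.basisFun K (Fin n)
  refine ⟨_, h, ⟨e.toMatrix b, b.toMatrix e, e.toMatrix_mul_toMatrix_flip b,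
    b.toMatrix_mul_toMatrix_flip e⟩, ?_⟩
  change A = e.toMatrix b * LinearMap.toMatrix b b (Matrix.toLin' A) * b.toMatrix e
  rw [basis_toMatrix_mul_linearMap_toMatrix_mul_basis_toMatrix, LinearMap.toMatrix_eq_toMatrix',
    LinearMap.toMatrix'_toLin']

/-- A square matrix whose minimal polynomial is `(X - λ)²` is X-formable. -/
theorem xformable_of_minpoly_sq {K : Type*} [Field K] {n : ℕ}
    (A : Matrix (Fin n) (Fin n) K) (lam : K)
    (hmin : minpoly K A = (X - C lam) ^ 2) : IsXFormable A := by
  set N := A - algebraMap K (Matrix (Fin n) (Fin n) K) lam with hN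
  have hN2 : N * N = 0 := by simpa [hmin, sq] using minpoly.aeval K A
  obtain ⟨b, hb⟩ := exists_basis_apply_eq_zero_or_rev_of_comp_self_eq_zero (finrank_fin_fun K)
    (Matrix.toLin' N) (by rw [← Matrix.toLin'_mul, hN2, map_zero])
  refine isXFormable_of_isXForm_toMatrix A b
    (isXForm_toMatrix_of_apply_eq_smul_add_smul_rev b _ fun j => ?_)
  have hA : Matrix.toLin' A (b j) = lam • b j + Matrix.toLin' N (b j) := by
    simp [hN, Algebra.algebraMap_eq_smul_one]
  rcases hb j with h | h
  · exact ⟨lam, 0, by rw [hA, h, zero_smul, add_zero]⟩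
  · exact ⟨lam, 1, by rw [hA, h, one_smul]⟩
end
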